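/- arXiv:2007.12243 — 11 statements merged into one kernel-verified Lean document; each statement's English description precedes it below -/
import Mathlib

section
/- Let F be a field with char F ≠ 2 and let n ≥ 7 be an integer. Then there exists a unital F-subalgebra S of the algebra of n×n matrices over F such that every element of S is an upper triangular matrix, S is a local ring, S is not commutative, and S is centrally essential. -/
/-- A (not necessarily unital) ring is *centrally essential* if either it is commutative, or
for every non-central element `a` there exist nonzero central elements `x`, `y` with
`a * x = y`. -/
def IsCentrallyEssential (R : Type*) [NonUnitalNonAssocRing R] : Prop :=
  (∀ a b : R, a * b = b * a) ∨
    ∀ a : R, ¬ (∀ b : R, a * b = b * a) →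
      ∃ x y : R, (∀ b : R, x * b = b * x) ∧ (∀ b : R, y * b = b * y) ∧
        x ≠ 0 ∧ y ≠ 0 ∧ a * x = y

/-!
The algebra is `S = F ⊕ N`, where `N` is spanned by matrices `X, Y, Z, S₁, S₂, T` supported in the
top-left `7 × 7` corner whose only nonzero products are `XY = -YX = Z` and
`XS₁ = S₁X = YS₂ = S₂Y = T`. Then `N³ = 0`, so every element is a scalar plus a nilpotent and `S`
is local; `XY - YX = 2Z ≠ 0` since `char F ≠ 2`. The elements with no `X` and no `Y` component
are central, and multiplying an element with `X`-coefficient `a ≠ 0` (resp.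
`Y`-coefficient `b ≠ 0`) by the central `S₁` (resp. `S₂`) gives a central element with
`T`-coefficient `a` (resp. `b`).
-/

open Matrix

theorem IsLocalRing.of_forall_exists_isNilpotent_sub_algebraMap {K A : Type*} [Field K] [Ring A]
    [Algebra K A] [Nontrivial A] (h : ∀ x : A, ∃ c : K, IsNilpotent (x - algebraMap K A c)) :
    IsLocalRing A := by
  refine .of_isUnit_or_isUnit_one_sub_self fun x => ?_
  obtain ⟨c, hc⟩ := h x
  rcases eq_or_ne c 0 with rfl | hc0
  · exact .inr (by simpa using hc.isUnit_one_sub)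
  · have hunit : IsUnit (algebraMap K A c) := hc0.isUnit.map _
    exact .inl (by simpa using hc.isUnit_add_left_of_commute hunit (Algebra.commutes c _).symm)

theorem Matrix.BlockTriangular.smul {R α β m : Type*} [LT β] [Zero α] [SMulZeroClass R α]
    {M : Matrix m m α} {b : m → β} (hM : M.BlockTriangular b) (r : R) :
    (r • M).BlockTriangular b :=
  fun _ _ h => by simp [hM h]

namespace LocalCentrallyEssentialExample

variable {F : Type*} [Field F] {n : ℕ} (hn : 7 ≤ n)

def E (k l : Fin 7) : Matrix (Fin n) (Fin n) F := single (Fin.castLE hn k) (Fin.castLE hn l) 1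

lemma E_mul_E (k l k' l' : Fin 7) :
    (E hn k l * E hn k' l' : Matrix (Fin n) (Fin n) F) = if l = k' then E hn k l' else 0 := by
  split_ifs with h <;> simp [E, h]

lemma E_apply_castLE (k l k' l' : Fin 7) :
    (E hn k l : Matrix (Fin n) (Fin n) F) (Fin.castLE hn k') (Fin.castLE hn l') =
      if k = k' ∧ l = l' then 1 else 0 := by
  simp [E, single_apply]

lemma blockTriangular_E {k l : Fin 7} (hkl : k ≤ l) :
    (E hn k l : Matrix (Fin n) (Fin n) F).BlockTriangular id :=
  blockTriangular_single (by simpa using hkl) _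

def X : Matrix (Fin n) (Fin n) F := E hn 2 6 + E hn 1 3 + E hn 0 4
def Y : Matrix (Fin n) (Fin n) F := E hn 3 6 - E hn 1 2 + E hn 0 5
def Z : Matrix (Fin n) (Fin n) F := E hn 1 6
def S₁ : Matrix (Fin n) (Fin n) F := E hn 4 6 + E hn 0 2
def S₂ : Matrix (Fin n) (Fin n) F := E hn 5 6 + E hn 0 3
def T : Matrix (Fin n) (Fin n) F := E hn 0 6

def mat (c a b d s u t : F) : Matrix (Fin n) (Fin n) F :=
  c • 1 + a • X hn + b • Y hn + d • Z hn + s • S₁ hn + u • S₂ hn + t • T hn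

lemma mat_add (c a b d s u t c' a' b' d' s' u' t' : F) :
    mat hn c a b d s u t + mat hn c' a' b' d' s' u' t' =
      mat hn (c + c') (a + a') (b + b') (d + d') (s + s') (u + u') (t + t') := by
  simp only [mat]
  module

lemma mat_mul (c a b d s u t c' a' b' d' s' u' t' : F) :
    mat hn c a b d s u t * mat hn c' a' b' d' s' u' t' =
      mat hn (c * c') (c * a' + a * c') (c * b' + b * c')
        (c * d' + d * c' + a * b' - b * a') (c * s' + s * c') (c * u' + u * c')
        (c * t' + t * c' + a * s' + s * a' + b * u' + u * b') := by
  simp only [mat, X, Y, Z, S₁, S₂, T, add_mul, mul_add, sub_mul, mul_sub, smul_mul_assoc,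
    mul_smul_comm, one_mul, mul_one, E_mul_E, Fin.reduceEq, if_false, if_true, smul_zero,
    add_zero, zero_add, sub_zero, zero_sub, smul_neg, smul_add, smul_sub]
  match_scalars <;> ring

lemma mat_scalar (r : F) : mat hn r 0 0 0 0 0 0 = r • 1 := by
  simp [mat]

lemma mat_zero : mat hn (0 : F) 0 0 0 0 0 0 = 0 := by
  simp [mat]

lemma mat_apply_castLE_six (c a b d s u t : F) (k : Fin 7) :
    mat hn c a b d s u t (Fin.castLE hn k) (Fin.castLE hn 6) = ![t, d, a, b, s, u, c] k := by
  fin_cases k <;> simp [mat, X, Y, Z, S₁, S₂, T, E_apply_castLE, one_apply]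

lemma mat_inj {c a b d s u t c' a' b' d' s' u' t' : F} :
    mat hn c a b d s u t = mat hn c' a' b' d' s' u' t' ↔
      c = c' ∧ a = a' ∧ b = b' ∧ d = d' ∧ s = s' ∧ u = u' ∧ t = t' := by
  refine ⟨fun h => ?_, by rintro ⟨rfl, rfl, rfl, rfl, rfl, rfl, rfl⟩; rfl⟩
  have hcol (k : Fin 7) := congrFun (congrFun h (Fin.castLE hn k)) (Fin.castLE hn 6)
  simp only [mat_apply_castLE_six] at hcol
  exact ⟨hcol 6, hcol 2, hcol 3, hcol 1, hcol 4, hcol 5, hcol 0⟩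

lemma blockTriangular_mat (c a b d s u t : F) : (mat hn c a b d s u t).BlockTriangular id := by
  simp only [mat, X, Y, Z, S₁, S₂, T]
  apply_rules [BlockTriangular.add, BlockTriangular.sub, BlockTriangular.smul, blockTriangular_one,
    blockTriangular_E] <;> decide

lemma commute_mat (c d s u t c' a' b' d' s' u' t' : F) :
    Commute (mat hn c 0 0 d s u t) (mat hn c' a' b' d' s' u' t') := by
  rw [Commute, SemiconjBy, mat_mul, mat_mul, mat_inj]
  refine ⟨?_, ?_, ?_, ?_, ?_, ?_, ?_⟩ <;> ring

lemma mat_pow_three (a b d s u t : F) : mat hn 0 a b d s u t ^ 3 = 0 := by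
  rw [pow_three, mat_mul, mat_mul, ← mat_zero hn, mat_inj]
  refine ⟨?_, ?_, ?_, ?_, ?_, ?_, ?_⟩ <;> ring

variable (F) in
def S : Subalgebra F (Matrix (Fin n) (Fin n) F) where
  carrier := {M | ∃ c a b d s u t : F, M = mat hn c a b d s u t}
  mul_mem' := by
    rintro _ _ ⟨c, a, b, d, s, u, t, rfl⟩ ⟨c', a', b', d', s', u', t', rfl⟩
    exact ⟨_, _, _, _, _, _, _, mat_mul hn ..⟩
  add_mem' := by
    rintro _ _ ⟨c, a, b, d, s, u, t, rfl⟩ ⟨c', a', b', d', s', u', t', rfl⟩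
    exact ⟨_, _, _, _, _, _, _, mat_add hn ..⟩
  algebraMap_mem' r := ⟨r, 0, 0, 0, 0, 0, 0, by rw [mat_scalar, Algebra.algebraMap_eq_smul_one]⟩

theorem blockTriangular_of_mem_S {A : Matrix (Fin n) (Fin n) F} (hA : A ∈ S F hn) :
    A.BlockTriangular id := by
  obtain ⟨c, a, b, d, s, u, t, rfl⟩ := hA
  exact blockTriangular_mat hn c a b d s u t

def toS (c a b d s u t : F) : S F hn := ⟨mat hn c a b d s u t, c, a, b, d, s, u, t, rfl⟩

lemma exists_eq_toS (x : S F hn) : ∃ c a b d s u t : F, x = toS hn c a b d s u t := by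
  obtain ⟨_, c, a, b, d, s, u, t, rfl⟩ := x
  exact ⟨c, a, b, d, s, u, t, rfl⟩

lemma toS_mul (c a b d s u t c' a' b' d' s' u' t' : F) :
    toS hn c a b d s u t * toS hn c' a' b' d' s' u' t' =
      toS hn (c * c') (c * a' + a * c') (c * b' + b * c')
        (c * d' + d * c' + a * b' - b * a') (c * s' + s * c') (c * u' + u * c')
        (c * t' + t * c' + a * s' + s * a' + b * u' + u * b') :=
  Subtype.ext (mat_mul hn ..)

lemma toS_inj {c a b d s u t c' a' b' d' s' u' t' : F} :
    toS hn c a b d s u t = toS hn c' a' b' d' s' u' t' ↔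
      c = c' ∧ a = a' ∧ b = b' ∧ d = d' ∧ s = s' ∧ u = u' ∧ t = t' :=
  Subtype.ext_iff.trans (mat_inj hn)

lemma toS_zero : toS hn (0 : F) 0 0 0 0 0 0 = 0 :=
  Subtype.ext (mat_zero hn)

lemma toS_sub_algebraMap (c a b d s u t : F) :
    toS hn c a b d s u t - algebraMap F (S F hn) c = toS hn 0 a b d s u t :=
  Subtype.ext <| by
    change mat hn c a b d s u t - algebraMap F _ c = mat hn 0 a b d s u t
    simp only [mat, Algebra.algebraMap_eq_smul_one, zero_smul, zero_add]
    abel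

lemma toS_mul_comm (c d s u t : F) :
    ∀ y : S F hn, toS hn c 0 0 d s u t * y = y * toS hn c 0 0 d s u t := fun y => by
  obtain ⟨c', a', b', d', s', u', t', rfl⟩ := exists_eq_toS hn y
  exact Subtype.ext (commute_mat hn ..)

theorem isLocalRing_S : IsLocalRing (S F hn) := by
  have : Nonempty (Fin n) := ⟨Fin.castLE hn 0⟩
  refine .of_forall_exists_isNilpotent_sub_algebraMap (K := F) fun x => ?_
  obtain ⟨c, a, b, d, s, u, t, rfl⟩ := exists_eq_toS hn x
  refine ⟨c, 3, ?_⟩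
  rw [toS_sub_algebraMap]
  exact Subtype.ext (mat_pow_three hn ..)

theorem not_commutative_S (hF : ringChar F ≠ 2) : ¬ ∀ x y : S F hn, x * y = y * x := fun h => by
  have hXY := h (toS hn 0 1 0 0 0 0 0) (toS hn 0 0 1 0 0 0 0)
  simp only [toS_mul, toS_inj] at hXY
  exact Ring.neg_one_ne_one_of_char_ne_two hF (by linear_combination -hXY.2.2.2.1)

theorem isCentrallyEssential_S : IsCentrallyEssential (S F hn) := by
  refine .inr fun x hx => ?_
  obtain ⟨c, a, b, d, s, u, t, rfl⟩ := exists_eq_toS hn x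
  have hab : a ≠ 0 ∨ b ≠ 0 := by
    by_contra! h
    obtain ⟨rfl, rfl⟩ := h
    exact hx (toS_mul_comm hn c d s u t)
  obtain ⟨s', u', hne⟩ : ∃ s' u' : F, a * s' + b * u' ≠ 0 :=
    hab.elim (fun ha => ⟨1, 0, by simpa⟩) (fun hb => ⟨0, 1, by simpa⟩)
  have hmul : toS hn c a b d s u t * toS hn 0 0 0 0 s' u' 0 =
      toS hn 0 0 0 0 (c * s') (c * u') (a * s' + b * u') := by
    rw [toS_mul, toS_inj]
    refine ⟨?_, ?_, ?_, ?_, ?_, ?_, ?_⟩ <;> ring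
  have hy : toS hn (0 : F) 0 0 0 (c * s') (c * u') (a * s' + b * u') ≠ 0 := by
    rw [← toS_zero, Ne, toS_inj]
    exact fun h => hne h.2.2.2.2.2.2
  refine ⟨_, _, toS_mul_comm hn 0 0 s' u' 0, toS_mul_comm hn 0 0 (c * s') (c * u') _,
    fun h0 => hy ?_, hy, hmul⟩
  rw [← hmul, h0, mul_zero]

end LocalCentrallyEssentialExample

/-- For any field `F` of characteristic `≠ 2` and any `n ≥ 7`, there is a unital `F`-subalgebra
of the `n × n` matrices consisting of upper triangular matrices which is local,
non-commutative and centrally essential. -/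
theorem exists_local_noncommutative_centrallyEssential_subalgebra
    (F : Type*) [Field F] (hF : ringChar F ≠ 2) (n : ℕ) (hn : 7 ≤ n) :
    ∃ S : Subalgebra F (Matrix (Fin n) (Fin n) F),
      (∀ A ∈ S, ∀ i j : Fin n, j < i → A i j = 0) ∧
      IsLocalRing S ∧
      ¬ (∀ a b : S, a * b = b * a) ∧
      IsCentrallyEssential S :=
  open LocalCentrallyEssentialExample in
  ⟨S F hn, fun _ hA _ _ hij => blockTriangular_of_mem_S hn hA hij, isLocalRing_S hn,
    not_commutative_S hn hF, isCentrallyEssential_S hn⟩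
end

section
/- Let F be a field and n ≥ 2 an integer. Then neither the full matrix ring M_n(F) of all n×n matrices over F nor the ring T_n(F) of upper triangular n×n matrices over F is centrally essential. -/
/-- The unital algebra `T_n(F)` of upper triangular `n × n` matrices over `F`. -/
def upperTriangularAlgebra (F : Type*) [CommRing F] (n : ℕ) :
    Subalgebra F (Matrix (Fin n) (Fin n) F) where
  carrier := {A | ∀ i j : Fin n, j < i → A i j = 0}
  mul_mem' := by
    intro A B ha hb i j hij
    rw [Matrix.mul_apply]
    refine Finset.sum_eq_zero fun k _ => ?_
    rcases le_or_gt i k with h | h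
    · rw [hb k j (lt_of_lt_of_le hij h), mul_zero]
    · rw [ha i k h, zero_mul]
  add_mem' := by
    intro A B ha hb i j hij
    simp [Matrix.add_apply, ha i j hij, hb i j hij]
  algebraMap_mem' := by
    intro r i j hij
    rw [Matrix.algebraMap_eq_diagonal]
    exact Matrix.diagonal_apply_ne _ (ne_of_gt hij)

/-!
In both rings a central matrix commutes with the matrix units `E i j`, `i ≤ j`, hence is scalar;
so every nonzero central element is invertible. Then `a * x = y` with `x`, `y` central and
`x ≠ 0` forces `a = y * x⁻¹` to be central, whereas `E 0 0` and `E 0 1` do not commute.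
-/

theorem not_isCentrallyEssential_of_isUnit {R : Type*} [Ring R] {a b : R} (hab : ¬Commute a b)
    (hunit : ∀ x : R, (∀ b, x * b = b * x) → x ≠ 0 → IsUnit x) :
    ¬IsCentrallyEssential R := by
  rintro (hcomm | hess)
  · exact hab (hcomm a b)
  obtain ⟨x, y, hx, hy, hx0, -, hxy⟩ := hess a fun ha => hab (ha b)
  obtain ⟨u, rfl⟩ := hunit x hx hx0
  have hay : a = y * ↑u⁻¹ := by rw [← hxy, Units.mul_inv_cancel_right]
  apply hab
  rw [hay]
  exact Commute.mul_left (hy b) (Commute.units_inv_left (hx b))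

namespace Matrix

variable {n α : Type*} [Fintype n] [DecidableEq n] [Semiring α]

theorem not_commute_single_same_single [Nontrivial α] {i j : n} (hij : i ≠ j) :
    ¬Commute (single i i (1 : α)) (single i j 1) := by
  intro h
  have := congrFun (congrFun h i) j
  simp [hij.symm] at this

theorem mem_range_scalar_of_commute_single_of_le [LinearOrder n] {M : Matrix n n α}
    (hM : ∀ i j, i ≤ j → Commute (single i j 1) M) : M ∈ Set.range (scalar n) := by
  cases isEmpty_or_nonempty n
  · exact ⟨0, Subsingleton.elim _ _⟩
  obtain ⟨i⟩ := ‹Nonempty n›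
  have hdiag : ∀ j k, M j j = M k k := fun j k =>
    (le_total j k).elim (fun h => diag_eq_of_commute_single (hM j k h))
      fun h => (diag_eq_of_commute_single (hM k j h)).symm
  refine ⟨M i i, ext fun j k => ?_⟩
  obtain rfl | hjk := eq_or_ne j k
  · rw [scalar_apply, diagonal_apply_eq, hdiag j i]
  · rw [scalar_apply, diagonal_apply_ne _ hjk,
      row_eq_zero_of_commute_single (hM j j le_rfl) hjk.symm]

end Matrix

theorem Matrix.isUnit_of_central {n K : Type*} [Fintype n] [DecidableEq n] [DivisionRing K]
    {M : Matrix n n K} (hM : ∀ B, M * B = B * M) (hM0 : M ≠ 0) : IsUnit M := by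
  obtain ⟨c, rfl⟩ := mem_range_scalar_of_commute_single fun i j _ => (hM _).symm
  exact (isUnit_iff_ne_zero.mpr fun hc => hM0 (by rw [hc, map_zero])).map (scalar n)

namespace upperTriangularAlgebra

variable {F : Type*} [Field F] {n : ℕ}

theorem single_mem {i j : Fin n} (hij : i ≤ j) (c : F) :
    Matrix.single i j c ∈ upperTriangularAlgebra F n := by
  intro i' j' hlt
  rw [Matrix.single_apply_of_ne]
  rintro ⟨rfl, rfl⟩
  exact hij.not_gt hlt

theorem isUnit_of_central {A : upperTriangularAlgebra F n} (hA : ∀ B, A * B = B * A)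
    (hA0 : A ≠ 0) : IsUnit A := by
  obtain ⟨c, hc⟩ := Matrix.mem_range_scalar_of_commute_single_of_le (M := (A : Matrix _ _ F))
    fun i j hij => by exact congrArg Subtype.val (hA ⟨_, single_mem hij 1⟩).symm
  obtain rfl : A = algebraMap F _ c := Subtype.ext (by rw [← hc]; rfl)
  exact (isUnit_iff_ne_zero.mpr fun hc => hA0 (by rw [hc, map_zero])).map _

end upperTriangularAlgebra

/-- For `n ≥ 2`, neither the full matrix ring `M_n(F)` nor the upper triangular matrix ring
`T_n(F)` is centrally essential. -/
theorem matrix_not_centrallyEssential_and_upperTriangular_not_centrallyEssential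
    (F : Type*) [Field F] (n : ℕ) (hn : 2 ≤ n) :
    ¬ IsCentrallyEssential (Matrix (Fin n) (Fin n) F) ∧
    ¬ IsCentrallyEssential (upperTriangularAlgebra F n) := by
  let i : Fin n := ⟨0, by omega⟩
  let j : Fin n := ⟨1, by omega⟩
  have hij : i < j := Fin.mk_lt_mk.mpr zero_lt_one
  have hnc := Matrix.not_commute_single_same_single (α := F) hij.ne
  let a : upperTriangularAlgebra F n := ⟨_, upperTriangularAlgebra.single_mem (le_refl i) 1⟩
  let b : upperTriangularAlgebra F n := ⟨_, upperTriangularAlgebra.single_mem hij.le 1⟩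
  have hab : ¬Commute a b := fun h => hnc (congrArg Subtype.val h)
  exact ⟨not_isCentrallyEssential_of_isUnit hnc fun _ => Matrix.isUnit_of_central,
    not_isCentrallyEssential_of_isUnit hab fun _ => upperTriangularAlgebra.isUnit_of_central⟩
end

section
/- Let R be a (not necessarily unital) ring which is centrally essential and whose center Z(R) is a semiprime ring, i.e., Z(R) contains no nonzero element x with x² = 0 (Z(R) is reduced). Then R is commutative. -/
theorem mem_center_iff_forall_mul_comm {M : Type*} [Semigroup M] {z : M} :
    z ∈ Set.center M ↔ ∀ b, z * b = b * z :=
  Semigroup.mem_center_iff.trans (forall_congr' fun _ => eq_comm)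

theorem commutator_mul_eq_zero_of_mem_center {R : Type*} [NonUnitalRing R] {a x : R}
    (hx : x ∈ Set.center R) (hax : a * x ∈ Set.center R) (b : R) :
    (a * b - b * a) * x = 0 := by
  have hx := mem_center_iff_forall_mul_comm.1 hx
  have hax := mem_center_iff_forall_mul_comm.1 hax
  rw [sub_mul, mul_assoc, ← hx b, ← mul_assoc, mul_assoc b, ← hax b, sub_self]

namespace IsCentrallyEssential

variable {R : Type*} [NonUnitalRing R]

theorem exists_mul_mem_center_ne_zero (h : IsCentrallyEssential R) {a : R}
    (ha : a ∉ Set.center R) : ∃ x ∈ Set.center R, a * x ∈ Set.center R ∧ a * x ≠ 0 := by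
  rw [mem_center_iff_forall_mul_comm] at ha
  rcases h with hcomm | h
  · exact absurd (hcomm a) ha
  obtain ⟨x, y, hx, hy, -, hy0, rfl⟩ := h a ha
  exact ⟨x, mem_center_iff_forall_mul_comm.2 hx, mem_center_iff_forall_mul_comm.2 hy, hy0⟩

variable (hce : IsCentrallyEssential R) (hred : ∀ z ∈ Set.center R, z * z = 0 → z = 0)
include hce hred

theorem exists_mem_center_mul_mem_center_ne_zero {r : R} (hr : r ≠ 0) :
    ∃ x ∈ Set.center R, r * x ∈ Set.center R ∧ r * x ≠ 0 := by
  by_cases hrc : r ∈ Set.center R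
  · exact ⟨r, hrc, Set.mul_mem_center hrc hrc, fun h => hr (hred r hrc h)⟩
  · exact hce.exists_mul_mem_center_ne_zero hrc

theorem exists_mul_mem_center_mul_ne_zero (a : R) {z : R} (hz : z ∈ Set.center R)
    (hz0 : z ≠ 0) : ∃ x ∈ Set.center R, a * x ∈ Set.center R ∧ z * x ≠ 0 := by
  by_cases haz : a * z ∈ Set.center R
  · exact ⟨z, hz, haz, fun h => hz0 (hred z hz h)⟩
  obtain ⟨x', hx', hau, hau0⟩ := hce.exists_mul_mem_center_ne_zero haz
  rw [mul_assoc] at hau hau0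
  set u := z * x'
  have hu : u ∈ Set.center R := Set.mul_mem_center hz hx'
  refine ⟨u, hu, hau, fun hzu => hau0 (hred _ hau ?_)⟩
  have huu : u * u = 0 := calc
    u * u = z * x' * u := rfl
    _ = z * u * x' := by rw [mul_assoc, mem_center_iff_forall_mul_comm.1 hx' u, ← mul_assoc]
    _ = 0 := by rw [hzu, zero_mul]
  rw [mul_assoc, mem_center_iff_forall_mul_comm.1 hu (a * u), mul_assoc, huu, mul_zero, mul_zero]

theorem eq_zero_of_forall_mul_eq_zero {a r : R}
    (hr : ∀ x ∈ Set.center R, a * x ∈ Set.center R → r * x = 0) : r = 0 := by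
  by_contra hr0
  obtain ⟨x₁, hx₁, hz, hz0⟩ := exists_mem_center_mul_mem_center_ne_zero hce hred hr0
  obtain ⟨x, hx, hax, hzx⟩ := exists_mul_mem_center_mul_ne_zero hce hred a hz hz0
  apply hzx
  rw [mul_assoc, mem_center_iff_forall_mul_comm.1 hx₁, ← mul_assoc, hr x hx hax, zero_mul]

end IsCentrallyEssential

/-- A centrally essential ring whose center is reduced (no nonzero central element of
square zero) is commutative. -/
theorem commutative_of_centrallyEssential_of_center_reduced
    (R : Type*) [NonUnitalRing R] (hce : IsCentrallyEssential R)
    (hred : ∀ x : R, (∀ b : R, x * b = b * x) → x * x = 0 → x = 0) :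
    ∀ a b : R, a * b = b * a := by
  intro a b
  have hred' : ∀ z ∈ Set.center R, z * z = 0 → z = 0 :=
    fun z hz => hred z (mem_center_iff_forall_mul_comm.1 hz)
  exact sub_eq_zero.1 <| hce.eq_zero_of_forall_mul_eq_zero hred' fun x hx hax =>
    commutator_mul_eq_zero_of_mem_center hx hax b
end

section
/- Let R be a centrally essential (not necessarily unital) ring. Then for every n ∈ ℕ, all elements x₁,…,xₙ, y₁,…,yₙ, r ∈ R and every idempotent e ∈ R (e = e²), the following implication holds: if x₁y₁ + … + xₙyₙ = e and x₁(re)y₁ + … + xₙ(re)yₙ = 0, then re = 0. -/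
section

variable {R ι : Type*} [NonUnitalSemiring R] {s : Finset ι} {x y : ι → R} {a c e : R}

theorem sum_mul_central_mul (hc : ∀ b : R, c * b = b * c) :
    ∑ i ∈ s, x i * c * y i = (∑ i ∈ s, x i * y i) * c := by
  rw [Finset.sum_mul]
  refine Finset.sum_congr rfl fun i _ => ?_
  rw [mul_assoc, hc, ← mul_assoc]

theorem sum_mul_mul_central_mul (hc : ∀ b : R, c * b = b * c) :
    ∑ i ∈ s, x i * (a * c) * y i = (∑ i ∈ s, x i * a * y i) * c := by
  rw [Finset.sum_mul]
  refine Finset.sum_congr rfl fun i _ => ?_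
  rw [← mul_assoc, mul_assoc _ c, hc, ← mul_assoc]

theorem mul_central_mul_eq_of_mul_eq (hc : ∀ b : R, c * b = b * c) (ha : a * e = a) :
    a * c * e = a * c := by
  rw [mul_assoc, hc, ← mul_assoc, ha]

theorem eq_zero_of_central_of_sum_mul_mul_eq_zero (hc : ∀ b : R, c * b = b * c)
    (hce : c * e = c) (hxy : ∑ i ∈ s, x i * y i = e) (hxcy : ∑ i ∈ s, x i * c * y i = 0) :
    c = 0 := by
  calc c = c * e := hce.symm
    _ = e * c := hc e
    _ = ∑ i ∈ s, x i * c * y i := by rw [sum_mul_central_mul hc, hxy]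
    _ = 0 := hxcy

end

/-- In a centrally essential ring, if `x₁y₁ + … + xₙyₙ = e` for an idempotent `e` and
`x₁(re)y₁ + … + xₙ(re)yₙ = 0`, then `re = 0`. -/
theorem centrallyEssential_idempotent_relation
    (R : Type*) [NonUnitalRing R] (hce : IsCentrallyEssential R)
    (n : ℕ) (x y : Fin n → R) (r e : R) (he : e = e * e)
    (h1 : ∑ i, x i * y i = e)
    (h2 : ∑ i, x i * (r * e) * y i = 0) :
    r * e = 0 := by
  have hre : r * e * e = r * e := by rw [mul_assoc, ← he]
  by_cases hcen : ∀ b : R, r * e * b = b * (r * e)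
  · exact eq_zero_of_central_of_sum_mul_mul_eq_zero hcen hre h1 h2
  rcases hce with hcomm | hce
  · exact absurd (fun b => hcomm _ _) hcen
  obtain ⟨z, w, hz, hw, -, hw0, rfl⟩ := hce (r * e) hcen
  refine absurd (eq_zero_of_central_of_sum_mul_mul_eq_zero hw
    (mul_central_mul_eq_of_mul_eq hz hre) h1 ?_) hw0
  rw [sum_mul_mul_central_mul hz, h2, zero_mul]
end

section
/- Every idempotent of a centrally essential (not necessarily unital) ring R is central, i.e., if e ∈ R satisfies e² = e then e ∈ Z(R). -/
/-!
If `e` is idempotent, then `a = e * c - e * c * e` satisfies `e * a = a` and `a * e = 0`, and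
both properties pass to every multiple `a * x` by a central `x`. An element with these properties
that commutes with `e` is zero, so no nonzero central element is of the form `a * x`, and central
essentiality forces `a = 0`, i.e. `e * c = e * c * e`. Symmetrically `c * e = e * c * e`.
-/

namespace IsCentrallyEssential

variable {R : Type*} [NonUnitalRing R]

theorem eq_zero_of_forall_central_mul (hce : IsCentrallyEssential R) {a : R}
    (ha : (∀ b, a * b = b * a) → a = 0)
    (hax : ∀ x : R, (∀ b, x * b = b * x) → (∀ b, a * x * b = b * (a * x)) → a * x = 0) :
    a = 0 := by
  rcases hce with hcomm | hce
  · exact ha (hcomm a)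
  by_contra ha0
  obtain ⟨x, _, hx, hax_central, -, hax0, rfl⟩ := hce a fun hc ↦ ha0 (ha hc)
  exact hax0 (hax x hx hax_central)

theorem eq_zero_of_mul_eq_self_of_mul_eq_zero (hce : IsCentrallyEssential R) {e a : R}
    (hea : e * a = a) (hae : a * e = 0) : a = 0 := by
  refine hce.eq_zero_of_forall_central_mul (fun ha ↦ by rw [← hea, ← ha e, hae]) ?_
  intro x hx hax
  calc a * x = e * (a * x) := by rw [← mul_assoc, hea]
    _ = a * (e * x) := by rw [← hax e, mul_assoc, hx e]
    _ = 0 := by rw [← mul_assoc, hae, zero_mul]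

theorem eq_zero_of_mul_eq_zero_of_mul_eq_self (hce : IsCentrallyEssential R) {e a : R}
    (hea : e * a = 0) (hae : a * e = a) : a = 0 := by
  refine hce.eq_zero_of_forall_central_mul (fun ha ↦ by rw [← hae, ha e, hea]) ?_
  intro x hx hax
  calc a * x = a * x * e := by rw [mul_assoc, hx e, ← mul_assoc, hae]
    _ = e * (a * x) := hax e
    _ = 0 := by rw [← mul_assoc, hea, zero_mul]

end IsCentrallyEssential

/-- Every idempotent of a centrally essential ring is central. -/
theorem idempotent_central_of_centrallyEssential
    (R : Type*) [NonUnitalRing R] (hce : IsCentrallyEssential R)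
    (e : R) (he : e * e = e) :
    ∀ b : R, e * b = b * e := by
  intro b
  have left : e * b = e * b * e := sub_eq_zero.mp <|
    hce.eq_zero_of_mul_eq_self_of_mul_eq_zero (e := e)
      (by simp only [mul_sub, ← mul_assoc, he])
      (by rw [sub_mul, mul_assoc (e * b), he, sub_self])
  have right : b * e = e * b * e := sub_eq_zero.mp <|
    hce.eq_zero_of_mul_eq_zero_of_mul_eq_self (e := e)
      (by simp only [mul_sub, ← mul_assoc, he, sub_self])
      (by rw [sub_mul, mul_assoc b, mul_assoc (e * b), he])
  rw [left, right]
end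

section
/- Let F be a field, n a positive integer, and S a unital F-subalgebra of the ring T_n(F) of upper triangular n×n matrices over F such that S is a local ring. Then S is centrally essential if and only if the Jacobson radical J(S) of S, regarded as a non-unital ring, is centrally essential. -/
/-!
In a local ring the Jacobson radical `J` is exactly the set of nonunits. If `a ∈ J` is not
central and `x`, `a * x` are nonzero central elements, then `x ∈ J`: a central unit `x` would make
`a = (a * x) * x⁻¹` central. Conversely, the `(0, 0)` entry is an `F`-algebra homomorphism
`S → F`, so `S = F + J`; hence an element commuting with `J` is central in `S`, and a noncentral
`a = c + j` is handled through the witnesses for `j ∈ J` (taking `j = a` when `a` is a nonunit; when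
`a` is a unit, `a * X ≠ 0` for free).
-/

set_option synthInstance.maxHeartbeats 1000000

/-- The Jacobson radical of a ring, regarded as a non-unital subring. -/
def jacobsonRadicalSubring (S : Type*) [Ring S] : NonUnitalSubring S where
  carrier := {x | x ∈ Ideal.jacobson (⊥ : Ideal S)}
  add_mem' := by
    intro a b ha hb
    exact Ideal.add_mem (Ideal.jacobson (⊥ : Ideal S)) ha hb
  zero_mem' := by
    show (0 : S) ∈ Ideal.jacobson (⊥ : Ideal S)
    exact Ideal.zero_mem _
  neg_mem' := by
    intro x hx
    exact Submodule.neg_mem (Ideal.jacobson (⊥ : Ideal S)) hx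
  mul_mem' := by
    intro a b _ hb
    exact Ideal.mul_mem_left (Ideal.jacobson (⊥ : Ideal S)) a hb

namespace IsLocalRing

variable {R : Type*} [Ring R] [IsLocalRing R]

instance isDedekindFiniteMonoid : IsDedekindFiniteMonoid R where
  mul_eq_one_symm {a b} hab := by
    -- `a * (1 - b * a) = 0` rules out the unit `1 - b * a`; the unit `b * a` is idempotent
    rcases isUnit_or_isUnit_of_add_one (sub_add_cancel (1 : R) (b * a)) with hu | hu
    · have ha : a = 0 := hu.mul_left_eq_zero.1 <| by
        rw [mul_sub, ← mul_assoc, hab, one_mul, mul_one, sub_self]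
      exact absurd (hab.symm.trans (by rw [ha, zero_mul])) one_ne_zero
    · exact hu.mul_left_cancel (by rw [mul_assoc, ← mul_assoc a, hab, one_mul, mul_one])

theorem mem_jacobson_bot_iff_not_isUnit {z : R} :
    z ∈ Ideal.jacobson (⊥ : Ideal R) ↔ ¬IsUnit z := by
  refine ⟨fun hz hu => ?_, fun hz => Ideal.mem_jacobson_iff.2 fun y => ?_⟩
  · have : Ideal.jacobson (⊥ : Ideal R) ≠ ⊤ := by
      rw [Ne, Ideal.jacobson_eq_top_iff]; exact bot_ne_top
    exact this (Ideal.eq_top_of_isUnit_mem _ hz hu)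
  · have hyz : IsUnit (y * z + 1) :=
      (isUnit_or_isUnit_of_add_one (by abel : y * z + 1 + -(y * z) = 1)).resolve_right
        fun h => hz (isUnit_of_mul_isUnit_right ((IsUnit.neg_iff _).1 h))
    obtain ⟨u, hu⟩ := hyz
    refine ⟨↑u⁻¹, ?_⟩
    rw [Ideal.mem_bot, mul_assoc, ← mul_add_one (↑u⁻¹ : R), ← hu, u.inv_mul, sub_self]

theorem sub_algebraMap_mem_jacobson {K : Type*} [CommRing K] [Nontrivial K] [Algebra K R]
    (φ : R →ₐ[K] K) (a : R) :
    a - algebraMap K R (φ a) ∈ Ideal.jacobson (⊥ : Ideal R) := by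
  refine mem_jacobson_bot_iff_not_isUnit.2 fun hu => ?_
  simpa using hu.map φ

end IsLocalRing

section

variable {R : Type*} [Ring R]

theorem forall_mul_comm_jacobsonRadicalSubring_iff {x : jacobsonRadicalSubring R} :
    (∀ b : jacobsonRadicalSubring R, x * b = b * x) ↔
      ∀ j ∈ Ideal.jacobson (⊥ : Ideal R), Commute (x : R) j := by
  simp only [Subtype.forall, Subtype.ext_iff]
  rfl

theorem commute_of_forall_mem_jacobson_commute
    (hdec : ∀ a : R, ∃ c ∈ Set.center R, a - c ∈ Ideal.jacobson (⊥ : Ideal R)) {z : R}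
    (hz : ∀ j ∈ Ideal.jacobson (⊥ : Ideal R), Commute z j) (b : R) : Commute z b := by
  obtain ⟨c, hc, hbc⟩ := hdec b
  simpa using (hz _ hbc).add_right (Semigroup.mem_center_iff.1 hc z : Commute z c)

end

namespace IsLocalRing

variable {R : Type*} [Ring R] [IsLocalRing R]

theorem isCentrallyEssential_jacobsonRadicalSubring (h : IsCentrallyEssential R) :
    IsCentrallyEssential (jacobsonRadicalSubring R) := by
  rcases h with hcomm | h
  · exact Or.inl fun a b => Subtype.ext (hcomm a b)
  refine Or.inr fun a ha => ?_
  have ha' : ¬∀ b : R, (a : R) * b = b * a := fun hall => ha fun b => Subtype.ext (hall b)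
  obtain ⟨x, y, hx, hy, hx0, hy0, rfl⟩ := h a ha'
  -- a unit `x` would make `a = (a * x) * x⁻¹` central
  have hxJ : x ∈ Ideal.jacobson (⊥ : Ideal R) := by
    refine mem_jacobson_bot_iff_not_isUnit.2 fun ⟨u, hu⟩ => ha' fun b => ?_
    subst hu
    simpa using (Commute.mul_left (hy b) (Commute.units_inv_left (hx b))).eq
  refine ⟨⟨x, hxJ⟩, ⟨a * x, Ideal.mul_mem_left _ _ hxJ⟩, fun b => Subtype.ext (hx b),
    fun b => Subtype.ext (hy b), ?_, ?_, rfl⟩ <;> simpa [Subtype.ext_iff]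

theorem isCentrallyEssential_of_jacobsonRadicalSubring
    (hdec : ∀ a : R, ∃ c ∈ Set.center R, a - c ∈ Ideal.jacobson (⊥ : Ideal R))
    (h : IsCentrallyEssential (jacobsonRadicalSubring R)) : IsCentrallyEssential R := by
  have central {x : jacobsonRadicalSubring R} (hx : ∀ b, x * b = b * x) (b : R) :
      Commute (x : R) b :=
    commute_of_forall_mem_jacobson_commute hdec (forall_mul_comm_jacobsonRadicalSubring_iff.1 hx) b
  rcases h with hcomm | h
  · exact Or.inl fun a b => (commute_of_forall_mem_jacobson_commute hdec
      (fun j hj => (central (x := ⟨j, hj⟩) (fun k => hcomm _ k) a).symm) b).eq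
  refine Or.inr fun a ha => ?_
  -- a nonunit is itself in the radical; a unit keeps `a * X` nonzero whatever `c` is
  obtain ⟨c, hc, hac, hne⟩ : ∃ c ∈ Set.center R, a - c ∈ Ideal.jacobson (⊥ : Ideal R) ∧
      ∀ X : R, X ≠ 0 → (a - c) * X ≠ 0 → a * X ≠ 0 := by
    by_cases hu : IsUnit a
    · obtain ⟨c, hc, hac⟩ := hdec a
      exact ⟨c, hc, hac, fun X hX _ h => hX (hu.mul_right_eq_zero.1 h)⟩
    · exact ⟨0, Set.zero_mem_center, by simpa using mem_jacobson_bot_iff_not_isUnit.2 hu,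
        fun X _ => by simp⟩
  have hcb (b : R) : Commute c b := (Semigroup.mem_center_iff.1 hc b).symm
  have hj : ¬∀ b : jacobsonRadicalSubring R, ⟨a - c, hac⟩ * b = b * ⟨a - c, hac⟩ := by
    intro hall
    refine ha fun b => ?_
    simpa using ((central hall b).add_left (hcb b)).eq
  obtain ⟨X, Y, hX, hY, hX0, hY0, hXY⟩ := h _ hj
  have haX : a * X = Y + c * X := by
    rw [← congrArg Subtype.val hXY]; push_cast; rw [sub_mul, sub_add_cancel]
  refine ⟨X, a * X, fun b => (central hX b).eq, fun b => ?_, by simpa using hX0, ?_, rfl⟩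
  · rw [haX]
    exact ((central hY b).add_left ((hcb b).mul_left (central hX b))).eq
  · refine hne X (by simpa using hX0) ?_
    simpa [← hXY, Subtype.ext_iff] using hY0

end IsLocalRing

namespace Matrix

variable {ι R : Type*} [Fintype ι] [LinearOrder ι]

theorem IsUpperTriangular.mul_apply_self [NonUnitalNonAssocSemiring R] {M N : Matrix ι ι R}
    (hM : M.IsUpperTriangular) (hN : N.IsUpperTriangular) (i : ι) :
    (M * N) i i = M i i * N i i := by
  rw [mul_apply]
  refine Finset.sum_eq_single i (fun k _ hk => ?_) (by simp)
  rcases hk.lt_or_gt with h | h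
  · rw [hM h, zero_mul]
  · rw [hN h, mul_zero]

variable (R) in
def upperTriangularDiagEntry [CommSemiring R] (i : ι) :
    blockTriangularSubalgebra R R (id : ι → ι) →ₐ[R] R where
  toFun M := (M : Matrix ι ι R) i i
  map_one' := one_apply_eq i
  map_mul' M N := IsUpperTriangular.mul_apply_self M.2 N.2 i
  map_zero' := rfl
  map_add' _ _ := rfl
  commutes' r := by simp [algebraMap_matrix_apply]

end Matrix

/-- A local unital subalgebra `S` of the upper triangular matrices is centrally essential
iff its Jacobson radical, regarded as a non-unital ring, is centrally essential. -/
theorem centrallyEssential_iff_jacobson_centrallyEssential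
    (F : Type*) [Field F] (n : ℕ) (hn : 0 < n)
    (S : Subalgebra F (Matrix (Fin n) (Fin n) F))
    (hS : ∀ A ∈ S, ∀ i j : Fin n, j < i → A i j = 0)
    (hloc : IsLocalRing S) :
    IsCentrallyEssential S ↔ IsCentrallyEssential (jacobsonRadicalSubring S) := by
  let φ : S →ₐ[F] F := (Matrix.upperTriangularDiagEntry F ⟨0, hn⟩).comp
    (Subalgebra.inclusion fun A hA _ _ hij => hS A hA _ _ hij)
  have hdec (a : S) : ∃ c ∈ Set.center S, a - c ∈ Ideal.jacobson (⊥ : Ideal S) :=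
    ⟨_, Set.algebraMap_mem_center _, IsLocalRing.sub_algebraMap_mem_jacobson φ a⟩
  exact ⟨IsLocalRing.isCentrallyEssential_jacobsonRadicalSubring,
    IsLocalRing.isCentrallyEssential_of_jacobsonRadicalSubring hdec⟩
end

section
/- Let F be a field and n ≥ 3 an integer. Then the non-unital ring N_n(F) of strictly upper triangular n×n matrices over F is not centrally essential. -/
/-- The non-unital algebra `N_n(F)` of strictly upper triangular `n × n` matrices. -/
def strictUpperTriangularAlgebra (F : Type*) [CommRing F] (n : ℕ) :
    NonUnitalSubalgebra F (Matrix (Fin n) (Fin n) F) where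
  carrier := {A | ∀ i j : Fin n, j ≤ i → A i j = 0}
  add_mem' := by
    intro A B ha hb i j hij
    simp [Matrix.add_apply, ha i j hij, hb i j hij]
  zero_mem' := by
    intro i j hij
    rfl
  mul_mem' := by
    intro A B ha hb i j hij
    rw [Matrix.mul_apply]
    refine Finset.sum_eq_zero fun k _ => ?_
    rcases le_or_gt k i with h | h
    · rw [ha i k h, zero_mul]
    · rw [hb k j (hij.trans h.le), mul_zero]
  smul_mem' := by
    intro c A ha i j hij
    simp [Matrix.smul_apply, ha i j hij]

open Matrix

theorem not_isCentrallyEssential_of_mul_eq_zero {R : Type*} [NonUnitalNonAssocRing R] (a : R)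
    (ha : ¬ ∀ b : R, a * b = b * a) (h : ∀ x : R, (∀ b : R, x * b = b * x) → a * x = 0) :
    ¬ IsCentrallyEssential R := by
  rintro (hcomm | hce)
  · exact ha (hcomm a)
  · obtain ⟨x, _, hx, -, -, hy, rfl⟩ := hce a ha
    exact hy (h x hx)

theorem Matrix.not_commute_single_single {n α : Type*} [DecidableEq n] [Fintype n] [Semiring α]
    [Nontrivial α] {i j k : n} (hik : i ≠ k) : ¬ Commute (single i j (1 : α)) (single j k 1) := by
  intro h
  have := congr_fun (congr_fun h.eq i) k
  simp [hik.symm] at this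

section StrictUpperTriangular

variable {F : Type*} [CommRing F] {n : ℕ}

theorem single_mem_strictUpperTriangularAlgebra {i j : Fin n} (hij : i < j) (c : F) :
    single i j c ∈ strictUpperTriangularAlgebra F n := fun _ _ hba =>
  single_apply_of_ne _ _ _ _ _ <| by
    rintro ⟨rfl, rfl⟩
    exact hba.not_gt hij

theorem single_mul_eq_zero_of_commute {i j : Fin n} {M : Matrix (Fin n) (Fin n) F}
    (hM : M ∈ strictUpperTriangularAlgebra F n) (hc : Commute (single i j 1) M) :
    single i j 1 * M = 0 := by
  have hrow : ∀ k, M j k = 0 := by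
    intro k
    by_cases hk : k = j
    · rw [hk, ← diag_eq_of_commute_single hc]
      exact hM i i le_rfl
    · exact row_eq_zero_of_commute_single hc hk
  ext a b
  by_cases ha : a = i
  · simp [ha, hrow]
  · simp [ha]

end StrictUpperTriangular

/-- For `n ≥ 3`, the non-unital ring `N_n(F)` of strictly upper triangular matrices is not
centrally essential. -/
theorem strictUpperTriangular_not_centrallyEssential
    (F : Type*) [Field F] (n : ℕ) (hn : 3 ≤ n) :
    ¬ IsCentrallyEssential (strictUpperTriangularAlgebra F n) := by
  let i : Fin n := ⟨0, by omega⟩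
  let j : Fin n := ⟨1, by omega⟩
  let k : Fin n := ⟨2, by omega⟩
  let a : strictUpperTriangularAlgebra F n :=
    ⟨single i j 1, single_mem_strictUpperTriangularAlgebra (by simp [i, j, Fin.lt_def]) 1⟩
  let b : strictUpperTriangularAlgebra F n :=
    ⟨single j k 1, single_mem_strictUpperTriangularAlgebra (by simp [j, k, Fin.lt_def]) 1⟩
  refine not_isCentrallyEssential_of_mul_eq_zero a (fun ha => ?_) fun x hx => ?_
  · exact not_commute_single_single (by simp [i, k, Fin.ext_iff]) (congrArg Subtype.val (ha b))
  · exact Subtype.ext (single_mul_eq_zero_of_commute x.2 (congrArg Subtype.val (hx a)).symm)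
end

section
/- Let F be a field, n ≥ 2, and S a non-unital F-subalgebra of N_n(F) containing the nilpotent Jordan block A = E₁₂ + E₂₃ + … + E_{(n-1)n}. If S is centrally essential and the center Z(S) of S equals the one-dimensional F-linear span of A^{n-1}, then S is commutative. -/
/-- The nilpotent Jordan block `E₁₂ + E₂₃ + ⋯ + E_{(n-1)n}`. -/
def jordanBlock (F : Type*) [Field F] (n : ℕ) : Matrix (Fin n) (Fin n) F :=
  Matrix.of fun i j => if (i : ℕ) + 1 = (j : ℕ) then 1 else 0

theorem IsCentrallyEssential.commutative_of_mul_central_eq_zero {R : Type*}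
    [NonUnitalNonAssocRing R] (hR : IsCentrallyEssential R)
    (hann : ∀ a z : R, (∀ b : R, z * b = b * z) → a * z = 0) :
    ∀ a b : R, a * b = b * a := by
  rcases hR with hcomm | hess
  · exact hcomm
  intro a b
  by_contra hab
  obtain ⟨x, y, hx, -, -, hy0, hxy⟩ := hess a fun ha => hab (ha b)
  exact hy0 (hxy ▸ hann a x hx)

theorem jordanBlock_pow_apply_ne_zero {F : Type*} [Field F] {n : ℕ} (k : ℕ) {i j : Fin n}
    (h : (jordanBlock F n ^ k) i j ≠ 0) : (i : ℕ) + k = j := by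
  induction k generalizing j with
  | zero =>
    rw [pow_zero] at h
    by_contra hij
    exact h (Matrix.one_apply_ne fun he => hij (by rw [he]; rfl))
  | succ k ih =>
    rw [pow_succ, Matrix.mul_apply] at h
    obtain ⟨l, -, hl⟩ := Finset.exists_ne_zero_of_sum_ne_zero h
    have hil := ih (left_ne_zero_of_mul hl)
    have hlj : (l : ℕ) + 1 = j := by
      by_contra hlj
      exact right_ne_zero_of_mul hl (by simp [jordanBlock, hlj])
    omega

theorem mul_jordanBlock_pow_pred_eq_zero {F : Type*} [Field F] {n : ℕ}
    {B : Matrix (Fin n) (Fin n) F} (hB : ∀ i j : Fin n, j ≤ i → B i j = 0) :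
    B * jordanBlock F n ^ (n - 1) = 0 := by
  ext i j
  rw [Matrix.mul_apply, Matrix.zero_apply]
  refine Finset.sum_eq_zero fun l _ => ?_
  rcases Nat.eq_zero_or_pos l with hl | hl
  · rw [hB i l (Fin.le_def.mpr (hl ▸ Nat.zero_le _)), zero_mul]
  · have hlj : (jordanBlock F n ^ (n - 1)) l j = 0 := by
      by_contra hlj
      have := jordanBlock_pow_apply_ne_zero (n - 1) hlj
      omega
    rw [hlj, mul_zero]

theorem commutative_of_center_eq_span_pow_general
    (F : Type*) [Field F] (n : ℕ)
    (S : NonUnitalSubalgebra F (Matrix (Fin n) (Fin n) F))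
    (hS : ∀ A ∈ S, ∀ i j : Fin n, j ≤ i → A i j = 0)
    (hce : IsCentrallyEssential S)
    (hcen : ∀ B : S, (∀ C : S, B * C = C * B) ↔
      ∃ c : F, (B : Matrix (Fin n) (Fin n) F) = c • (jordanBlock F n) ^ (n - 1)) :
    ∀ B C : S, B * C = C * B := by
  refine hce.commutative_of_mul_central_eq_zero fun B z hz => Subtype.ext ?_
  obtain ⟨c, hzc⟩ := (hcen z).mp hz
  change (B : Matrix (Fin n) (Fin n) F) * z = 0
  rw [hzc, Matrix.mul_smul, mul_jordanBlock_pow_pred_eq_zero (hS B B.2), smul_zero]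

/-- If `S` is a centrally essential non-unital subalgebra of the strictly upper triangular
`n × n` matrices containing the nilpotent Jordan block `A` and the center of `S` equals the
`F`-linear span of `A ^ (n - 1)`, then `S` is commutative. -/
theorem commutative_of_center_eq_span_pow
    (F : Type*) [Field F] (n : ℕ) (hn : 2 ≤ n)
    (S : NonUnitalSubalgebra F (Matrix (Fin n) (Fin n) F))
    (hS : ∀ A ∈ S, ∀ i j : Fin n, j ≤ i → A i j = 0)
    (hA : jordanBlock F n ∈ S)
    (hce : IsCentrallyEssential S)
    (hcen : ∀ B : S, (∀ C : S, B * C = C * B) ↔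
      ∃ c : F, (B : Matrix (Fin n) (Fin n) F) = c • (jordanBlock F n) ^ (n - 1)) :
    ∀ B C : S, B * C = C * B :=
  commutative_of_center_eq_span_pow_general F n S hS hce hcen
end

section
/- Let F be a field of characteristic ≠ 2. Then every centrally essential non-unital F-subalgebra of N₃(F), the algebra of strictly upper triangular 3×3 matrices over F, is commutative. -/
namespace Matrix

variable {R : Type*} [NonUnitalNonAssocSemiring R] {A B : Matrix (Fin 3) (Fin 3) R}

theorem mul_eq_single_of_strictUpper
    (hA : ∀ i j, j ≤ i → A i j = 0) (hB : ∀ i j, j ≤ i → B i j = 0) :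
    A * B = single 0 2 (A 0 1 * B 1 2) := by
  ext i j
  fin_cases i <;> fin_cases j <;> simp [mul_apply, Fin.sum_univ_three, hA, hB]

theorem mul_eq_zero_iff_of_strictUpper
    (hA : ∀ i j, j ≤ i → A i j = 0) (hB : ∀ i j, j ≤ i → B i j = 0) :
    A * B = 0 ↔ A 0 1 * B 1 2 = 0 := by
  rw [mul_eq_single_of_strictUpper hA hB]
  exact ⟨fun h => by simpa using congrFun₂ h 0 2, fun h => by rw [h, single_zero]⟩

theorem commute_iff_of_strictUpper
    (hA : ∀ i j, j ≤ i → A i j = 0) (hB : ∀ i j, j ≤ i → B i j = 0) :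
    Commute A B ↔ A 0 1 * B 1 2 = B 0 1 * A 1 2 := by
  rw [Commute, SemiconjBy, mul_eq_single_of_strictUpper hA hB,
    mul_eq_single_of_strictUpper hB hA]
  exact ⟨fun h => by simpa using congrFun₂ h 0 2, fun h => by rw [h]⟩

end Matrix

theorem centrallyEssential_subalgebra_N3_commutative_general
    (F : Type*) [Field F]
    (S : NonUnitalSubalgebra F (Matrix (Fin 3) (Fin 3) F))
    (hS : ∀ A ∈ S, ∀ i j : Fin 3, j ≤ i → A i j = 0)
    (hce : IsCentrallyEssential S) :
    ∀ a b : S, a * b = b * a := by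
  have hcomm (a b : S) : a * b = b * a ↔ a.1 0 1 * b.1 1 2 = b.1 0 1 * a.1 1 2 := by
    rw [Subtype.ext_iff]
    exact Matrix.commute_iff_of_strictUpper (hS a a.2) (hS b b.2)
  refine hce.elim id fun hce a b => by_contra fun hab => ?_
  obtain ⟨x, -, hx, -, -, hax, rfl⟩ := hce a fun h => hab (h b)
  have hx12 : x.1 1 2 ≠ 0 := by
    refine right_ne_zero_of_mul (a := a.1 0 1) fun h => hax (Subtype.ext ?_)
    exact (Matrix.mul_eq_zero_iff_of_strictUpper (hS a a.2) (hS x x.2)).2 h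
  have hxa := (hcomm x a).1 (hx a)
  have hxb := (hcomm x b).1 (hx b)
  exact hab <| (hcomm a b).2 <| mul_left_cancel₀ hx12 <| by
    linear_combination a.1 1 2 * hxb - b.1 1 2 * hxa

/-- Over a field of characteristic `≠ 2`, every centrally essential non-unital subalgebra of
the strictly upper triangular `3 × 3` matrices is commutative. -/
theorem centrallyEssential_subalgebra_N3_commutative
    (F : Type*) [Field F] (hF : ringChar F ≠ 2)
    (S : NonUnitalSubalgebra F (Matrix (Fin 3) (Fin 3) F))
    (hS : ∀ A ∈ S, ∀ i j : Fin 3, j ≤ i → A i j = 0)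
    (hce : IsCentrallyEssential S) :
    ∀ a b : S, a * b = b * a :=
  centrallyEssential_subalgebra_N3_commutative_general F S hS hce
end

section
/- Let F be a field of characteristic ≠ 2 and n ≥ 7 an integer. Let S ⊆ M_n(F) be the set of all matrices A determined by parameters a₁₂, a₁₃, …, a₁ₙ ∈ F as follows: the first row of A is (0, a₁₂, a₁₃, …, a₁ₙ), the (2,4) entry equals a₁₃, the (2,n) entry equals a_{1,n-2}, the (3,n) entry equals a_{1,n-1}, the (n-2,n) entry equals a₁₂, the (n-1,n) entry equals a₁₃, and all other entries are zero. Then S is a non-unital F-subalgebra of the strictly upper triangular n×n matrices, S is not commutative, and S is centrally essential. -/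
/-- The matrix determined by the parameters `a_{12}, …, a_{1n}` (here `a j` is the entry in
position `(1, j+1)` in `1`-indexed notation, i.e. in position `(0, j)` in `0`-indexed
notation): the first row is `(0, a_{12}, …, a_{1n})`, the `(2,4)` entry is `a_{13}`, the
`(2,n)` entry is `a_{1,n-2}`, the `(3,n)` entry is `a_{1,n-1}`, the `(n-2,n)` entry is
`a_{12}`, the `(n-1,n)` entry is `a_{13}`, and all other entries vanish. -/
def specialMatrix (F : Type*) [Field F] (n : ℕ) (a : ℕ → F) : Matrix (Fin n) (Fin n) F :=
  Matrix.of fun i j =>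
    if (i : ℕ) = 0 ∧ 1 ≤ (j : ℕ) then a j
    else if (i : ℕ) = 1 ∧ (j : ℕ) = 3 then a 2
    else if (i : ℕ) = 1 ∧ (j : ℕ) = n - 1 then a (n - 3)
    else if (i : ℕ) = 2 ∧ (j : ℕ) = n - 1 then a (n - 2)
    else if (i : ℕ) = n - 3 ∧ (j : ℕ) = n - 1 then a 1
    else if (i : ℕ) = n - 2 ∧ (j : ℕ) = n - 1 then a 2
    else 0

/-!
Write `A a` for `specialMatrix F n a`. Only the rows `0, 1, 2, n-3, n-2` of `A b` are nonzero and
column `0` of `A a` vanishes, so `A a * A b = A (specialMul n a b)`: the product is supported on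
the entries `(0, 3)` and `(0, n-1)`. In particular `S` is closed under multiplication. The
coefficient at `(0, n-1)` is symmetric in `a` and `b`, so `A a` and `A b` commute iff
`a 1 * b 2 = b 1 * a 2`; hence `A c` is central as soon as `c 1 = c 2 = 0`, and all products are
central. If `A p` is not central then `p 1 ≠ 0` or `p 2 ≠ 0`, and multiplying by the central
matrix `A (Pi.single (n-3) 1)`, resp. `A (Pi.single (n-2) 1)`, gives a central matrix whose
`(0, n-1)` entry is `p 1`, resp. `p 2`.
-/

section

variable {F : Type*} [Field F] {n : ℕ}

lemma specialMatrix_apply_of_le (hn : 7 ≤ n) (a : ℕ → F) {i j : Fin n} (hji : j ≤ i) :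
    specialMatrix F n a i j = 0 := by
  have hji' : (j : ℕ) ≤ i := hji
  simp only [specialMatrix, Matrix.of_apply]
  split_ifs <;> grind

lemma specialMatrix_apply_mk_of_ne (a : ℕ → F) (i : Fin n) {m : ℕ} (hm : m < n) (hm1 : 1 ≤ m)
    (hm3 : m ≠ 3) (hmn : m ≠ n - 1) :
    specialMatrix F n a i ⟨m, hm⟩ = if (i : ℕ) = 0 then a m else 0 := by
  simp only [specialMatrix, Matrix.of_apply]
  split_ifs <;> grind

lemma specialMatrix_apply_eq_zero_of_row_ne (a : ℕ → F) {k : Fin n} (j : Fin n)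
    (hk0 : (k : ℕ) ≠ 0) (hk1 : (k : ℕ) ≠ 1) (hk2 : (k : ℕ) ≠ 2) (hk3 : (k : ℕ) ≠ n - 3)
    (hk4 : (k : ℕ) ≠ n - 2) : specialMatrix F n a k j = 0 := by
  simp only [specialMatrix, Matrix.of_apply]
  split_ifs <;> grind

def specialMul (n : ℕ) (a b : ℕ → F) : ℕ → F := fun j =>
  if j = 3 then a 1 * b 2
  else if j = n - 1 then a 1 * b (n - 3) + a 2 * b (n - 2) + a (n - 3) * b 1 + a (n - 2) * b 2
  else 0

lemma specialMatrix_mul (hn : 7 ≤ n) (a b : ℕ → F) :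
    specialMatrix F n a * specialMatrix F n b = specialMatrix F n (specialMul n a b) := by
  ext i j
  let K : Finset (Fin n) := {⟨1, by omega⟩, ⟨2, by omega⟩, ⟨n - 3, by omega⟩, ⟨n - 2, by omega⟩}
  have hK : ∀ k ∉ K, specialMatrix F n a i k * specialMatrix F n b k j = 0 := by
    intro k hk
    simp only [K, Finset.mem_insert, Finset.mem_singleton, Fin.ext_iff, not_or] at hk
    obtain hk0 | hk0 := eq_or_ne (k : ℕ) 0
    · rw [specialMatrix_apply_of_le hn a (Fin.le_iff_val_le_val.2 (by omega)), zero_mul]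
    · rw [specialMatrix_apply_eq_zero_of_row_ne b j hk0 hk.1 hk.2.1 hk.2.2.1 hk.2.2.2, mul_zero]
  rw [Matrix.mul_apply, ← Finset.sum_subset K.subset_univ fun k _ hk => hK k hk,
    Finset.sum_insert (by simp [Fin.ext_iff]; omega),
    Finset.sum_insert (by simp [Fin.ext_iff]; omega),
    Finset.sum_insert (by simp [Fin.ext_iff]; omega), Finset.sum_singleton,
    specialMatrix_apply_mk_of_ne a i (m := 1) (by omega) (by omega) (by omega) (by omega),
    specialMatrix_apply_mk_of_ne a i (m := 2) (by omega) (by omega) (by omega) (by omega),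
    specialMatrix_apply_mk_of_ne a i (m := n - 3) (by omega) (by omega) (by omega) (by omega),
    specialMatrix_apply_mk_of_ne a i (m := n - 2) (by omega) (by omega) (by omega) (by omega)]
  obtain ⟨i, hi⟩ := i
  obtain ⟨j, hj⟩ := j
  simp only [specialMatrix, specialMul, Matrix.of_apply]
  obtain rfl | hi0 := eq_or_ne i 0 <;>
  obtain rfl | rfl | ⟨hj3, hjn⟩ : j = 3 ∨ j = n - 1 ∨ (j ≠ 3 ∧ j ≠ n - 1) := by omega
  all_goals simp (disch := omega) only [if_pos, if_neg, true_and, and_true, ↓reduceIte, ite_self]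
  all_goals ring

lemma specialMatrix_add (a b : ℕ → F) :
    specialMatrix F n a + specialMatrix F n b = specialMatrix F n (a + b) := by
  ext i j
  simp only [specialMatrix, Matrix.add_apply, Matrix.of_apply, Pi.add_apply]
  split_ifs <;> simp

lemma specialMatrix_smul (c : F) (a : ℕ → F) :
    c • specialMatrix F n a = specialMatrix F n (c • a) := by
  ext i j
  simp only [specialMatrix, Matrix.smul_apply, Matrix.of_apply, Pi.smul_apply]
  split_ifs <;> simp

lemma specialMatrix_zero : specialMatrix F n 0 = 0 := by
  ext i j
  simp only [specialMatrix, Matrix.of_apply, Matrix.zero_apply, Pi.zero_apply]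
  split_ifs <;> rfl

lemma specialMatrix_apply_zero_mk (a : ℕ → F) {m : ℕ} (hm : m < n) (hm1 : 1 ≤ m) :
    specialMatrix F n a ⟨0, by omega⟩ ⟨m, hm⟩ = a m := by
  simp [specialMatrix, hm1]

lemma specialMatrix_ne_zero {a : ℕ → F} {m : ℕ} (hm : m < n) (hm1 : 1 ≤ m) (ha : a m ≠ 0) :
    specialMatrix F n a ≠ 0 := fun h =>
  ha (by simpa [specialMatrix_apply_zero_mk a hm hm1] using congrFun₂ h ⟨0, by omega⟩ ⟨m, hm⟩)

lemma commute_specialMatrix_iff (hn : 7 ≤ n) (a b : ℕ → F) :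
    Commute (specialMatrix F n a) (specialMatrix F n b) ↔ a 1 * b 2 = b 1 * a 2 := by
  rw [Commute, SemiconjBy, specialMatrix_mul hn, specialMatrix_mul hn]
  constructor
  · intro h
    have h03 := congrFun₂ h ⟨0, by omega⟩ ⟨3, by omega⟩
    simpa [specialMatrix_apply_zero_mk, specialMul] using h03
  · intro h
    congr 1
    funext j
    simp only [specialMul]
    split_ifs
    exacts [h, by ring, rfl]

lemma commute_specialMatrix_of_eq_zero (hn : 7 ≤ n) {c : ℕ → F} (hc1 : c 1 = 0) (hc2 : c 2 = 0)
    (b : ℕ → F) : Commute (specialMatrix F n c) (specialMatrix F n b) :=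
  (commute_specialMatrix_iff hn c b).2 (by simp [hc1, hc2])

lemma commute_specialMatrix_mul (hn : 7 ≤ n) (a b c : ℕ → F) :
    Commute (specialMatrix F n a * specialMatrix F n b) (specialMatrix F n c) := by
  rw [specialMatrix_mul hn]
  exact commute_specialMatrix_of_eq_zero hn (by simp [specialMul]; omega)
    (by simp [specialMul]; omega) c

lemma exists_specialMatrix_mul_ne_zero (hn : 7 ≤ n) {p : ℕ → F} (hp : p 1 ≠ 0 ∨ p 2 ≠ 0) :
    ∃ c : ℕ → F, c 1 = 0 ∧ c 2 = 0 ∧ specialMatrix F n c ≠ 0 ∧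
      specialMatrix F n p * specialMatrix F n c ≠ 0 := by
  have h1 : 1 ≠ n - 3 := by omega
  have h2 : 2 ≠ n - 3 := by omega
  have h3 : 1 ≠ n - 2 := by omega
  have h4 : 2 ≠ n - 2 := by omega
  have h5 : n - 1 ≠ 3 := by omega
  have h6 : n - 3 ≠ n - 2 := by omega
  rcases hp with hp | hp
  · refine ⟨Pi.single (n - 3) 1, by simp [h1], by simp [h2],
      specialMatrix_ne_zero (m := n - 3) (by omega) (by omega) (by simp), ?_⟩
    rw [specialMatrix_mul hn]
    refine specialMatrix_ne_zero (m := n - 1) (by omega) (by omega) ?_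
    simpa [specialMul, Pi.single_apply, h1, h2, h5, h6.symm] using hp
  · refine ⟨Pi.single (n - 2) 1, by simp [h3], by simp [h4],
      specialMatrix_ne_zero (m := n - 2) (by omega) (by omega) (by simp), ?_⟩
    rw [specialMatrix_mul hn]
    refine specialMatrix_ne_zero (m := n - 1) (by omega) (by omega) ?_
    simpa [specialMul, Pi.single_apply, h3, h4, h5, h6] using hp

def specialSubalgebra (F : Type*) [Field F] {n : ℕ} (hn : 7 ≤ n) :
    NonUnitalSubalgebra F (Matrix (Fin n) (Fin n) F) where
  carrier := Set.range (specialMatrix F n)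
  zero_mem' := ⟨0, specialMatrix_zero⟩
  add_mem' := by
    rintro _ _ ⟨a, rfl⟩ ⟨b, rfl⟩
    exact ⟨a + b, (specialMatrix_add a b).symm⟩
  mul_mem' := by
    rintro _ _ ⟨a, rfl⟩ ⟨b, rfl⟩
    exact ⟨specialMul n a b, (specialMatrix_mul hn a b).symm⟩
  smul_mem' := by
    rintro c _ ⟨a, rfl⟩
    exact ⟨c • a, (specialMatrix_smul c a).symm⟩

lemma adjoin_range_specialMatrix (hn : 7 ≤ n) :
    NonUnitalAlgebra.adjoin F (Set.range (specialMatrix F n)) = specialSubalgebra F hn :=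
  NonUnitalAlgebra.adjoin_eq (specialSubalgebra F hn)

lemma specialSubalgebra_not_forall_mul_comm (hn : 7 ≤ n) :
    ¬ ∀ x y : specialSubalgebra F hn, x * y = y * x := fun h => by
  have hcomm : Commute (specialMatrix F n (Pi.single 1 1)) (specialMatrix F n (Pi.single 2 1)) :=
    congrArg Subtype.val (h ⟨_, _, rfl⟩ ⟨_, _, rfl⟩)
  simp [commute_specialMatrix_iff hn] at hcomm

lemma isCentrallyEssential_specialSubalgebra (hn : 7 ≤ n) :
    IsCentrallyEssential (specialSubalgebra F hn) := by
  have central : ∀ {c : ℕ → F}, c 1 = 0 → c 2 = 0 → ∀ y : specialSubalgebra F hn,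
      ⟨specialMatrix F n c, c, rfl⟩ * y = y * ⟨specialMatrix F n c, c, rfl⟩ := by
    rintro c hc1 hc2 ⟨_, b, rfl⟩
    exact Subtype.ext (commute_specialMatrix_of_eq_zero hn hc1 hc2 b).eq
  right
  rintro ⟨_, p, rfl⟩ hp
  obtain ⟨c, hc1, hc2, hc, hpc⟩ := exists_specialMatrix_mul_ne_zero hn (p := p) (by
    contrapose! hp
    exact central hp.1 hp.2)
  refine ⟨⟨_, c, rfl⟩, ⟨_, p, rfl⟩ * ⟨_, c, rfl⟩, central hc1 hc2, ?_,
    Subtype.coe_ne_coe.1 hc, Subtype.coe_ne_coe.1 hpc, rfl⟩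
  rintro ⟨_, b, rfl⟩
  exact Subtype.ext (commute_specialMatrix_mul hn p c b).eq

end

theorem specialMatrices_noncommutative_centrallyEssential_general
    (F : Type*) [Field F] (n : ℕ) (hn : 7 ≤ n) :
    ((NonUnitalAlgebra.adjoin F (Set.range (specialMatrix F n)) :
        Set (Matrix (Fin n) (Fin n) F)) = Set.range (specialMatrix F n)) ∧
    (∀ A ∈ Set.range (specialMatrix F n), ∀ i j : Fin n, j ≤ i → A i j = 0) ∧
    ¬ (∀ a b : NonUnitalAlgebra.adjoin F (Set.range (specialMatrix F n)), a * b = b * a) ∧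
    IsCentrallyEssential (NonUnitalAlgebra.adjoin F (Set.range (specialMatrix F n))) := by
  rw [adjoin_range_specialMatrix hn]
  refine ⟨rfl, ?_, specialSubalgebra_not_forall_mul_comm hn,
    isCentrallyEssential_specialSubalgebra hn⟩
  rintro _ ⟨a, rfl⟩ i j hji
  exact specialMatrix_apply_of_le hn a hji

/-- For `n ≥ 7` and a field of characteristic `≠ 2`, the set `S` of all matrices of the above
shape is a non-unital `F`-subalgebra of the strictly upper triangular `n × n` matrices which
is not commutative and is centrally essential. -/
theorem specialMatrices_noncommutative_centrallyEssential
    (F : Type*) [Field F] (hF : ringChar F ≠ 2) (n : ℕ) (hn : 7 ≤ n) :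
    ((NonUnitalAlgebra.adjoin F (Set.range (specialMatrix F n)) :
        Set (Matrix (Fin n) (Fin n) F)) = Set.range (specialMatrix F n)) ∧
    (∀ A ∈ Set.range (specialMatrix F n), ∀ i j : Fin n, j ≤ i → A i j = 0) ∧
    ¬ (∀ a b : NonUnitalAlgebra.adjoin F (Set.range (specialMatrix F n)), a * b = b * a) ∧
    IsCentrallyEssential (NonUnitalAlgebra.adjoin F (Set.range (specialMatrix F n))) :=
  specialMatrices_noncommutative_centrallyEssential_general F n hn
end

section
/- Let D be a division ring that is not commutative. Then the ring T₂(D) of upper triangular 2×2 matrices over D is not centrally essential, while its Jacobson radical J(T₂(D)) (the set of strictly upper triangular 2×2 matrices), regarded as a non-unital ring, has zero multiplication and is commutative, hence is centrally essential. -/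
/-- The ring `T₂(D)` of upper triangular `2 × 2` matrices over `D`. -/
def upperTriangularSubring (D : Type*) [Ring D] : Subring (Matrix (Fin 2) (Fin 2) D) where
  carrier := {A | ∀ i j : Fin 2, j < i → A i j = 0}
  mul_mem' := by
    intro A B ha hb i j hij
    rw [Matrix.mul_apply]
    refine Finset.sum_eq_zero fun k _ => ?_
    rcases le_or_gt i k with h | h
    · rw [hb k j (lt_of_lt_of_le hij h), mul_zero]
    · rw [ha i k h, zero_mul]
  one_mem' := by
    intro i j hij
    exact Matrix.one_apply_ne (ne_of_gt hij)
  add_mem' := by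
    intro A B ha hb i j hij
    simp [Matrix.add_apply, ha i j hij, hb i j hij]
  zero_mem' := by
    intro i j hij
    rfl
  neg_mem' := by
    intro A ha i j hij
    simp [Matrix.neg_apply, ha i j hij]

/-- The set of strictly upper triangular `2 × 2` matrices over `D`, as a non-unital ring. -/
def strictUpperTriangularSubring (D : Type*) [Ring D] :
    NonUnitalSubring (Matrix (Fin 2) (Fin 2) D) where
  carrier := {A | ∀ i j : Fin 2, j ≤ i → A i j = 0}
  mul_mem' := by
    intro A B ha hb i j hij
    rw [Matrix.mul_apply]
    refine Finset.sum_eq_zero fun k _ => ?_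
    rcases le_or_gt k i with h | h
    · rw [ha i k h, zero_mul]
    · rw [hb k j (hij.trans h.le), mul_zero]
  add_mem' := by
    intro A B ha hb i j hij
    simp [Matrix.add_apply, ha i j hij, hb i j hij]
  zero_mem' := by
    intro i j hij
    rfl
  neg_mem' := by
    intro A ha i j hij
    simp [Matrix.neg_apply, ha i j hij]

/-!
Central elements of `T₂(D)` are scalar: commuting with `e₁₁` kills the `(0,1)` entry and
commuting with `e₁₂` equates the two diagonal entries. Every product `e₁₂ * x` has zero `(0,0)`
entry, so if it is central it vanishes; thus the non-central `e₁₂` has no nonzero central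
multiple.

The Jacobson radical lies in the kernels of the two diagonal projections `T₂(D) → D`, which are
maximal ideals since `D` is a division ring. Conversely, if `x` is strictly upper triangular then
`y * x` is square-zero for every `y`, so `1 - y * x` is a left inverse of `1 + y * x`.
-/

local notation "M₂" => Matrix (Fin 2) (Fin 2)

section Ring

variable {D : Type*} [Ring D]

theorem mem_upperTriangularSubring_iff {A : M₂ D} :
    A ∈ upperTriangularSubring D ↔ A 1 0 = 0 := by
  refine ⟨fun h => h 1 0 (by decide), fun h i j hij => ?_⟩
  fin_cases i <;> fin_cases j <;> first | exact h | exact absurd hij (by decide)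

theorem mem_strictUpperTriangularSubring_iff {A : M₂ D} :
    A ∈ strictUpperTriangularSubring D ↔ A 0 0 = 0 ∧ A 1 0 = 0 ∧ A 1 1 = 0 := by
  refine ⟨fun h => ⟨h 0 0 le_rfl, h 1 0 (by decide), h 1 1 le_rfl⟩, ?_⟩
  rintro ⟨h₀₀, h₁₀, h₁₁⟩ i j hij
  fin_cases i <;> fin_cases j <;>
    first | exact h₀₀ | exact h₁₀ | exact h₁₁ | exact absurd hij (by decide)

theorem single_mem_upperTriangularSubring {i j : Fin 2} (hij : i ≤ j) (c : D) :
    Matrix.single i j c ∈ upperTriangularSubring D := fun _ _ h =>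
  Matrix.single_apply_of_ne _ _ _ _ _ <| by rintro ⟨rfl, rfl⟩; exact h.not_ge hij

theorem diagonal_mem_upperTriangularSubring (d : Fin 2 → D) :
    Matrix.diagonal d ∈ upperTriangularSubring D := fun _ _ h =>
  Matrix.diagonal_apply_ne _ h.ne'

theorem strictUpperTriangular_mul_eq_zero {A B : M₂ D}
    (hA : A ∈ strictUpperTriangularSubring D) (hB : B ∈ strictUpperTriangularSubring D) :
    A * B = 0 := by
  obtain ⟨hA₀₀, hA₁₀, hA₁₁⟩ := mem_strictUpperTriangularSubring_iff.mp hA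
  obtain ⟨hB₀₀, hB₁₀, hB₁₁⟩ := mem_strictUpperTriangularSubring_iff.mp hB
  ext i j
  fin_cases i <;> fin_cases j <;>
    simp [Matrix.mul_apply, hA₀₀, hA₁₀, hA₁₁, hB₀₀, hB₁₀, hB₁₁]

theorem upperTriangular_mul_strictUpperTriangular_mem {A B : M₂ D}
    (hA : A ∈ upperTriangularSubring D) (hB : B ∈ strictUpperTriangularSubring D) :
    A * B ∈ strictUpperTriangularSubring D := by
  rw [mem_upperTriangularSubring_iff] at hA
  obtain ⟨hB₀₀, hB₁₀, hB₁₁⟩ := mem_strictUpperTriangularSubring_iff.mp hB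
  exact mem_strictUpperTriangularSubring_iff.mpr
    ⟨by simp [Matrix.mul_apply, hB₀₀, hB₁₀], by simp [Matrix.mul_apply, hA, hB₀₀, hB₁₀],
      by simp [Matrix.mul_apply, hA, hB₁₁]⟩

def upperTriangularDiagHom (i : Fin 2) : upperTriangularSubring D →+* D where
  toFun A := (A : M₂ D) i i
  map_one' := by simp
  map_mul' A B := by
    have hA := mem_upperTriangularSubring_iff.mp A.2
    have hB := mem_upperTriangularSubring_iff.mp B.2
    fin_cases i <;> simp [Matrix.mul_apply, hA, hB]
  map_zero' := rfl
  map_add' _ _ := rfl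

theorem upperTriangularDiagHom_surjective (i : Fin 2) :
    Function.Surjective (upperTriangularDiagHom (D := D) i) := fun c =>
  ⟨⟨Matrix.diagonal fun _ => c, diagonal_mem_upperTriangularSubring _⟩,
    Matrix.diagonal_apply_eq _ i⟩

theorem upperTriangular_apply_of_forall_mul_comm {y : upperTriangularSubring D}
    (hy : ∀ b, y * b = b * y) : (y : M₂ D) 0 1 = 0 ∧ (y : M₂ D) 0 0 = (y : M₂ D) 1 1 := by
  have hcomm₁₁ := congrArg (fun z : upperTriangularSubring D => (z : M₂ D) 0 1)
    (hy ⟨Matrix.single 0 0 1, single_mem_upperTriangularSubring le_rfl 1⟩)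
  have hcomm₁₂ := congrArg (fun z : upperTriangularSubring D => (z : M₂ D) 0 1)
    (hy ⟨Matrix.single 0 1 1, single_mem_upperTriangularSubring zero_le_one 1⟩)
  exact ⟨by simpa [Matrix.mul_apply] using hcomm₁₁.symm,
    by simpa [Matrix.mul_apply] using hcomm₁₂⟩

theorem upperTriangular_eq_zero_of_forall_mul_comm {y : upperTriangularSubring D}
    (hy : ∀ b, y * b = b * y) (h₀₀ : (y : M₂ D) 0 0 = 0) : y = 0 := by
  obtain ⟨h₀₁, h₁₁⟩ := upperTriangular_apply_of_forall_mul_comm hy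
  have h₁₀ := mem_upperTriangularSubring_iff.mp y.2
  ext i j
  fin_cases i <;> fin_cases j <;> simp_all

theorem not_isCentrallyEssential_upperTriangularSubring [Nontrivial D] :
    ¬ IsCentrallyEssential (upperTriangularSubring D) := by
  set e : upperTriangularSubring D :=
    ⟨Matrix.single 0 1 1, single_mem_upperTriangularSubring zero_le_one 1⟩
  have he : ¬ ∀ b, e * b = b * e := fun h =>
    one_ne_zero (α := D) (upperTriangular_apply_of_forall_mul_comm h).1
  rintro (hcomm | hess)
  · exact he fun b => hcomm e b
  · obtain ⟨x, y, -, hy, -, hy₀, rfl⟩ := hess e he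
    refine hy₀ (upperTriangular_eq_zero_of_forall_mul_comm hy ?_)
    simp [e, Matrix.mul_apply, mem_upperTriangularSubring_iff.mp x.2]

theorem mem_jacobson_of_strictUpperTriangular {x : upperTriangularSubring D}
    (hx : (x : M₂ D) ∈ strictUpperTriangularSubring D) :
    x ∈ Ideal.jacobson (⊥ : Ideal (upperTriangularSubring D)) := by
  refine Ideal.mem_jacobson_iff.mpr fun y => ⟨1 - y * x, ?_⟩
  have hyx : y * x * (y * x) = 0 := Subtype.ext <| strictUpperTriangular_mul_eq_zero
    (upperTriangular_mul_strictUpperTriangular_mem y.2 hx)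
    (upperTriangular_mul_strictUpperTriangular_mem y.2 hx)
  have hz : (1 - y * x) * y * x + (1 - y * x) - 1 = -(y * x * (y * x)) := by noncomm_ring
  rw [Ideal.mem_bot, hz, hyx, neg_zero]

end Ring

theorem jacobson_bot_le_ker_upperTriangularDiagHom {D : Type*} [DivisionRing D] (i : Fin 2) :
    Ideal.jacobson (⊥ : Ideal (upperTriangularSubring D)) ≤
      RingHom.ker (upperTriangularDiagHom i) :=
  sInf_le ⟨bot_le, RingHom.ker_isMaximal_of_surjective _ (upperTriangularDiagHom_surjective i)⟩

theorem mem_jacobson_bot_upperTriangularSubring_iff {D : Type*} [DivisionRing D]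
    (x : upperTriangularSubring D) :
    x ∈ Ideal.jacobson (⊥ : Ideal (upperTriangularSubring D)) ↔
      (x : M₂ D) ∈ strictUpperTriangularSubring D := by
  refine ⟨fun hx => ?_, mem_jacobson_of_strictUpperTriangular⟩
  exact mem_strictUpperTriangularSubring_iff.mpr
    ⟨jacobson_bot_le_ker_upperTriangularDiagHom 0 hx, mem_upperTriangularSubring_iff.mp x.2,
      jacobson_bot_le_ker_upperTriangularDiagHom 1 hx⟩

theorem upperTriangular2_not_centrallyEssential_but_jacobson_centrallyEssential_general
    (D : Type*) [DivisionRing D] :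
    ¬ IsCentrallyEssential (upperTriangularSubring D) ∧
    (∀ x : upperTriangularSubring D,
      x ∈ Ideal.jacobson (⊥ : Ideal (upperTriangularSubring D)) ↔
        (x : Matrix (Fin 2) (Fin 2) D) ∈ strictUpperTriangularSubring D) ∧
    (∀ a b : strictUpperTriangularSubring D, a * b = 0) ∧
    (∀ a b : strictUpperTriangularSubring D, a * b = b * a) ∧
    IsCentrallyEssential (strictUpperTriangularSubring D) := by
  have hmul (a b : strictUpperTriangularSubring D) : a * b = 0 :=
    Subtype.ext (strictUpperTriangular_mul_eq_zero a.2 b.2)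
  have hcomm (a b : strictUpperTriangularSubring D) : a * b = b * a := by rw [hmul, hmul]
  exact ⟨not_isCentrallyEssential_upperTriangularSubring,
    mem_jacobson_bot_upperTriangularSubring_iff, hmul, hcomm, Or.inl hcomm⟩

/-- For a non-commutative division ring `D`, the ring `T₂(D)` of upper triangular `2 × 2`
matrices is not centrally essential, while its Jacobson radical (which is the set of strictly
upper triangular matrices), regarded as a non-unital ring, has zero multiplication and is
commutative, hence is centrally essential. -/
theorem upperTriangular2_not_centrallyEssential_but_jacobson_centrallyEssential
    (D : Type*) [DivisionRing D] (hD : ¬ (∀ a b : D, a * b = b * a)) :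
    ¬ IsCentrallyEssential (upperTriangularSubring D) ∧
    (∀ x : upperTriangularSubring D,
      x ∈ Ideal.jacobson (⊥ : Ideal (upperTriangularSubring D)) ↔
        (x : Matrix (Fin 2) (Fin 2) D) ∈ strictUpperTriangularSubring D) ∧
    (∀ a b : strictUpperTriangularSubring D, a * b = 0) ∧
    (∀ a b : strictUpperTriangularSubring D, a * b = b * a) ∧
    IsCentrallyEssential (strictUpperTriangularSubring D) :=
  upperTriangular2_not_centrallyEssential_but_jacobson_centrallyEssential_general D
end
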